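/- arXiv:2509.25446 — 2 statements merged into one kernel-verified Lean document; each statement's English description precedes it below -/
import Mathlib

section
/- Let G be a finite group of order g, and for w ∈ G let f(w) be the number of pairs (u,v) ∈ G × G with w = uvu⁻¹v⁻¹. Then f is a class function on G, and for each irreducible character χ of G, the multiplicity ⟨f, χ⟩ equals g/χ(1). -/
open scoped BigOperators

/-!
Summing over pairs, `⟨f, χ⟩ = g⁻¹ ∑_u ∑_v χ(v u v⁻¹ u⁻¹)`. For fixed `u` the class sum
`∑_v ρ(v u v⁻¹)` commutes with `ρ`, so by Schur's lemma it is a scalar `c`, and comparing traces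
gives `c χ(1) = g χ(u)`. Taking the trace after composing with `ρ(u⁻¹)` turns the inner sum into
`c χ(u⁻¹)`, so `χ(1) ∑_u ∑_v χ(v u v⁻¹ u⁻¹) = g ∑_u χ(u) χ(u⁻¹) = g²` by orthogonality.
In particular `χ(1) ≠ 0`, and dividing gives the multiplicity.
-/

/-- The commutator-counting function: `f w` is the number of pairs `(u,v)`
with `w = u v u⁻¹ v⁻¹`. -/
noncomputable def commCount (G : Type) [Group G] (w : G) : ℕ :=
  Nat.card {p : G × G // w = p.1 * p.2 * p.1⁻¹ * p.2⁻¹}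

open CategoryTheory

universe u v

section CommutatorCount

variable {G : Type} [Group G]

theorem commCount_conj (g w : G) : commCount G (g * w * g⁻¹) = commCount G w := by
  let φ := MulAut.conj g
  refine Nat.card_congr ((Equiv.prodCongr φ.symm.toEquiv φ.symm.toEquiv).subtypeEquiv fun p => ?_)
  simp only [Equiv.prodCongr_apply, MulEquiv.toEquiv_eq_coe, MulEquiv.coe_toEquiv, Prod.map_fst,
    Prod.map_snd, ← map_inv, ← map_mul, φ.eq_symm_apply]
  rfl

theorem sum_commCount_mul [Fintype G] {R : Type*} [CommSemiring R] (f : G → R) :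
    ∑ w, (commCount G w : R) * f w = ∑ u, ∑ v, f (u * v * u⁻¹ * v⁻¹) := by
  classical
  simp only [commCount, Nat.card_eq_fintype_card, Fintype.card_subtype, Finset.card_filter,
    Nat.cast_sum, Finset.sum_mul, Nat.cast_ite, Nat.cast_one, Nat.cast_zero, ite_mul, one_mul, zero_mul]
  rw [Finset.sum_comm, Fintype.sum_prod_type]
  simp only [Finset.sum_ite_eq', Finset.mem_univ, if_true]

end CommutatorCount

namespace FDRep

variable {k : Type u} [Field k] {G : Type v} [Group G] [Fintype G] (V : FDRep k G)

noncomputable def sumConj (f : Module.End k V) : V ⟶ V where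
  hom := ConcreteCategory.ofHom (C := FGModuleCat k) (∑ g : G, V.ρ g * f * V.ρ g⁻¹)
  comm h := by
    ext x
    change (∑ g : G, V.ρ g * f * V.ρ g⁻¹) (V.ρ h x) = V.ρ h ((∑ g : G, V.ρ g * f * V.ρ g⁻¹) x)
    simp only [LinearMap.sum_apply, map_sum]
    refine Fintype.sum_equiv (Equiv.mulLeft h⁻¹) _ _ fun g => ?_
    simp [map_mul, Module.End.mul_apply]

theorem sumConj_hom (f : Module.End k V) :
    (sumConj V f).hom.hom.hom = ∑ g : G, V.ρ g * f * V.ρ g⁻¹ := rfl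

theorem trace_sumConj (f : Module.End k V) :
    LinearMap.trace k V (sumConj V f).hom.hom.hom = Fintype.card G * LinearMap.trace k V f := by
  have h (g : G) : LinearMap.trace k V (V.ρ g * f * V.ρ g⁻¹) = LinearMap.trace k V f := by
    rw [LinearMap.trace_mul_comm, ← mul_assoc, ← map_mul, inv_mul_cancel, map_one, one_mul]
  simp [sumConj_hom, map_sum, h]

theorem exists_sumConj_hom_eq_smul_one [IsAlgClosed k] [Simple V] (f : Module.End k V) :
    ∃ c : k, (sumConj V f).hom.hom.hom = c • 1 := by
  obtain ⟨c, hc⟩ := endomorphism_simple_eq_smul_id k (sumConj V f)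
  exact ⟨c, (congrArg (fun φ : V ⟶ V => φ.hom.hom.hom) hc).symm⟩

theorem character_one_mul_sum_character_conj_mul [IsAlgClosed k] [Simple V] (u x : G) :
    V.character 1 * ∑ g : G, V.character (g * u * g⁻¹ * x) =
      Fintype.card G * V.character u * V.character x := by
  obtain ⟨c, hc⟩ := exists_sumConj_hom_eq_smul_one V (V.ρ u)
  have hdim : c * V.character 1 = Fintype.card G * V.character u := by
    have := trace_sumConj V (V.ρ u)
    rwa [hc, map_smul, LinearMap.trace_one, smul_eq_mul, ← char_one] at this
  have hsum : ∑ g : G, V.character (g * u * g⁻¹ * x) = c * V.character x := by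
    have := congrArg (fun φ => LinearMap.trace k V (φ * V.ρ x)) hc
    simpa [sumConj_hom, Finset.sum_mul, map_sum, ← map_mul, character] using this
  rw [hsum]
  linear_combination V.character x * hdim

theorem sum_character_mul_character_inv [IsAlgClosed k] [Invertible (Nat.card G : k)] [Simple V] :
    ∑ g : G, V.character g * V.character g⁻¹ = Nat.card G := by
  have h := char_orthonormal V V
  rwa [if_pos ⟨Iso.refl V⟩, inv_mul_eq_one₀ (Invertible.ne_zero _), eq_comm] at h

end FDRep

theorem FDRep.character_one_mul_sum_commCount_mul_character_inv {k : Type u} [Field k]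
    [IsAlgClosed k] {G : Type} [Group G] [Fintype G] [Invertible (Nat.card G : k)]
    (V : FDRep k G) [Simple V] :
    V.character 1 * ∑ w : G, (commCount G w : k) * V.character w⁻¹ = (Fintype.card G : k) ^ 2 := by
  have hinv (u v : G) : (u * v * u⁻¹ * v⁻¹)⁻¹ = v * u * v⁻¹ * u⁻¹ := by group
  calc V.character 1 * ∑ w : G, (commCount G w : k) * V.character w⁻¹
      = ∑ u : G, V.character 1 * ∑ v : G, V.character (v * u * v⁻¹ * u⁻¹) := by
        rw [sum_commCount_mul, Finset.mul_sum]
        simp only [hinv]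
    _ = Fintype.card G * ∑ u : G, V.character u * V.character u⁻¹ := by
        rw [Finset.mul_sum]
        exact Finset.sum_congr rfl fun u _ => by
          rw [character_one_mul_sum_character_conj_mul, mul_assoc]
    _ = (Fintype.card G : k) ^ 2 := by
        rw [sum_character_mul_character_inv, Nat.card_eq_fintype_card, sq]

/-- `f(w) = #{(u,v) : w = uvu⁻¹v⁻¹}` is a class function, and its multiplicity
`⟨f, χ⟩` in each irreducible character `χ` equals `|G| / χ(1)`. -/
theorem commCount_classFunction_and_multiplicity (G : Type) [Group G] [Fintype G] :
    (∀ g w : G, commCount G (g * w * g⁻¹) = commCount G w) ∧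
    (∀ V : FDRep ℂ G, CategoryTheory.Simple V →
      (1 / (Fintype.card G : ℂ)) *
          ∑ w : G, (commCount G w : ℂ) * V.character w⁻¹ =
        (Fintype.card G : ℂ) / V.character 1) := by
  refine ⟨commCount_conj, fun V _ => ?_⟩
  have hG : (Fintype.card G : ℂ) ≠ 0 := Nat.cast_ne_zero.2 Fintype.card_ne_zero
  have : Invertible (Nat.card G : ℂ) := invertibleOfNonzero (by rwa [Nat.card_eq_fintype_card])
  have key := V.character_one_mul_sum_commCount_mul_character_inv
  have hdim : V.character 1 ≠ 0 := left_ne_zero_of_mul (key ▸ pow_ne_zero 2 hG)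
  field_simp
  linear_combination key
end

section
/- The lattice of Young diagrams (partitions ordered by containment) is a 1-differential poset: every partition λ is covered by exactly one more partition than it covers, and two distinct partitions have a common upper cover if and only if they have a common lower cover (and then exactly one of each). -/
/-!
Young's lattice is distributive, hence modular. In any lattice two distinct elements with a common
upper cover have their join as the only one, and dually for lower covers and the meet; modularity
says that `a` and `b` are covered by `a ⊔ b` iff they cover `a ⊓ b`.

Adding a cell to `λ` means adding a minimal cell of its complement (an outer corner), removing one
means removing a maximal cell of `λ` (an inner corner). Row `0` always carries an outer corner, and
row `i + 1` carries one exactly when row `i` carries an inner corner, so there is one more outer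
corner than inner corners.
-/

section Lattice

variable {α : Type*} [Lattice α] {a b : α}

theorem exists_covBy_and_covBy_iff_covBy_sup (hab : a ≠ b) :
    (∃ c, a ⋖ c ∧ b ⋖ c) ↔ a ⋖ a ⊔ b ∧ b ⋖ a ⊔ b := by
  refine ⟨fun ⟨c, hac, hbc⟩ => ?_, fun h => ⟨a ⊔ b, h⟩⟩
  rw [hac.wcovBy.sup_eq hbc.wcovBy hab]
  exact ⟨hac, hbc⟩

theorem exists_covBy_and_covBy_iff_inf_covBy (hab : a ≠ b) :
    (∃ c, c ⋖ a ∧ c ⋖ b) ↔ a ⊓ b ⋖ a ∧ a ⊓ b ⋖ b := by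
  refine ⟨fun ⟨c, hca, hcb⟩ => ?_, fun h => ⟨a ⊓ b, h⟩⟩
  rw [hca.wcovBy.inf_eq hcb.wcovBy hab]
  exact ⟨hca, hcb⟩

theorem setOf_covBy_and_covBy_eq_sup (hab : a ≠ b) (ha : a ⋖ a ⊔ b) (hb : b ⋖ a ⊔ b) :
    {c | a ⋖ c ∧ b ⋖ c} = {a ⊔ b} :=
  Set.eq_singleton_iff_unique_mem.2
    ⟨⟨ha, hb⟩, fun _ ⟨hac, hbc⟩ => (hac.wcovBy.sup_eq hbc.wcovBy hab).symm⟩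

theorem setOf_covBy_and_covBy_eq_inf (hab : a ≠ b) (ha : a ⊓ b ⋖ a) (hb : a ⊓ b ⋖ b) :
    {c | c ⋖ a ∧ c ⋖ b} = {a ⊓ b} :=
  Set.eq_singleton_iff_unique_mem.2
    ⟨⟨ha, hb⟩, fun _ ⟨hca, hcb⟩ => (hca.wcovBy.inf_eq hcb.wcovBy hab).symm⟩

theorem covBy_sup_and_covBy_sup_iff_inf_covBy [IsModularLattice α] :
    a ⋖ a ⊔ b ∧ b ⋖ a ⊔ b ↔ a ⊓ b ⋖ a ∧ a ⊓ b ⋖ b :=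
  ⟨fun ⟨ha, hb⟩ => ⟨inf_covBy_of_covBy_sup_right hb, inf_covBy_of_covBy_sup_left ha⟩,
    fun ⟨ha, hb⟩ => ⟨covBy_sup_of_inf_covBy_right hb, covBy_sup_of_inf_covBy_left ha⟩⟩

end Lattice

theorem IsLowerSet.insert {α : Type*} [PartialOrder α] {s : Set α} {a : α} (hs : IsLowerSet s)
    (ha : ∀ b < a, b ∈ s) : IsLowerSet (insert a s) := by
  rintro b c hcb (rfl | hb)
  · exact hcb.lt_or_eq.imp_left (ha c) |>.symm
  · exact Or.inr (hs hcb hb)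

namespace YoungDiagram

variable {μ ν : YoungDiagram} {c : ℕ × ℕ}

def outerCorners (μ : YoungDiagram) : Set (ℕ × ℕ) := {c | Minimal (· ∉ μ) c}

def innerCorners (μ : YoungDiagram) : Set (ℕ × ℕ) := {c | Maximal (· ∈ μ) c}

theorem mem_outerCorners : c ∈ μ.outerCorners ↔ Minimal (· ∉ μ) c := Iff.rfl

theorem mem_innerCorners : c ∈ μ.innerCorners ↔ Maximal (· ∈ μ) c := Iff.rfl

def insertCell (μ : YoungDiagram) (c : ℕ × ℕ) (hc : Minimal (· ∉ μ) c) : YoungDiagram where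
  cells := insert c μ.cells
  isLowerSet := by
    rw [Finset.coe_insert]
    exact μ.isLowerSet.insert fun b hb => not_not.1 (hc.not_prop_of_lt hb)

def eraseCell (μ : YoungDiagram) (c : ℕ × ℕ) (hc : Maximal (· ∈ μ) c) : YoungDiagram where
  cells := μ.cells.erase c
  isLowerSet := by
    rw [Finset.coe_erase]
    exact μ.isLowerSet.erase fun _ hb hcb => hc.eq_of_ge hb hcb

theorem covBy_of_cells_covBy (h : μ.cells ⋖ ν.cells) : μ ⋖ ν :=
  CovBy.of_image (OrderEmbedding.ofMapLEIff cells fun _ _ => cells_subset_iff) h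

theorem covBy_insertCell (hc : Minimal (· ∉ μ) c) : μ ⋖ μ.insertCell c hc :=
  covBy_of_cells_covBy (Finset.covBy_iff_exists_insert.2 ⟨c, hc.prop, rfl⟩)

theorem eraseCell_covBy (hc : Maximal (· ∈ μ) c) : μ.eraseCell c hc ⋖ μ :=
  covBy_of_cells_covBy (Finset.covBy_iff_exists_erase.2 ⟨c, hc.prop, rfl⟩)

theorem exists_eq_eraseCell_of_covBy (h : μ ⋖ ν) :
    ∃ c, ∃ hc : Maximal (· ∈ ν) c, μ = ν.eraseCell c hc := by
  obtain ⟨c, hc⟩ := (ν.cells \ μ.cells).exists_maximal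
    (Finset.sdiff_nonempty.2 fun hsub => h.lt.not_ge (cells_subset_iff.1 hsub))
  obtain ⟨hcν, hcμ⟩ := Finset.mem_sdiff.1 hc.prop
  -- a cell of `ν` above `c` cannot lie in the lower set `μ`, so `c` is maximal in all of `ν`
  have hinner : Maximal (· ∈ ν) c := ⟨hcν, fun d hdν hcd => hc.2
    (Finset.mem_sdiff.2 ⟨hdν, fun hdμ => hcμ (μ.isLowerSet hcd hdμ)⟩) hcd⟩
  have hle : μ ≤ ν.eraseCell c hinner := fun d hd =>
    Finset.mem_erase.2 ⟨fun hdc => hcμ (hdc ▸ hd), h.le hd⟩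
  exact ⟨c, hinner, ((h.eq_or_eq hle (eraseCell_covBy hinner).le).resolve_right
    (eraseCell_covBy hinner).ne).symm⟩

theorem exists_eq_insertCell_of_covBy (h : μ ⋖ ν) :
    ∃ c, ∃ hc : Minimal (· ∉ μ) c, ν = μ.insertCell c hc := by
  obtain ⟨c, hc, rfl⟩ := exists_eq_eraseCell_of_covBy h
  have houter : Minimal (· ∉ ν.eraseCell c hc) c := minimal_iff_forall_lt.2
    ⟨Finset.notMem_erase c ν.cells, fun d hdc =>
      not_not.2 (Finset.mem_erase.2 ⟨hdc.ne, ν.isLowerSet hdc.le hc.prop⟩)⟩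
  exact ⟨c, houter, YoungDiagram.ext (Finset.insert_erase hc.prop).symm⟩

theorem card_upperCovers_eq_card_outerCorners (μ : YoungDiagram) :
    Nat.card {ν | μ ⋖ ν} = Nat.card μ.outerCorners := by
  refine (Nat.card_eq_of_bijective (fun c : μ.outerCorners =>
    (⟨μ.insertCell c c.2, covBy_insertCell c.2⟩ : {ν | μ ⋖ ν})) ⟨?_, ?_⟩).symm
  · rintro ⟨c, hc⟩ ⟨d, _⟩ h
    exact Subtype.ext ((Finset.insert_inj (mem_outerCorners.1 hc).prop).1
      (congrArg (cells ∘ Subtype.val) h))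
  · rintro ⟨ν, h⟩
    obtain ⟨c, hc, rfl⟩ := exists_eq_insertCell_of_covBy h
    exact ⟨⟨c, hc⟩, rfl⟩

theorem card_lowerCovers_eq_card_innerCorners (μ : YoungDiagram) :
    Nat.card {ν | ν ⋖ μ} = Nat.card μ.innerCorners := by
  refine (Nat.card_eq_of_bijective (fun c : μ.innerCorners =>
    (⟨μ.eraseCell c c.2, eraseCell_covBy c.2⟩ : {ν | ν ⋖ μ})) ⟨?_, ?_⟩).symm
  · rintro ⟨c, hc⟩ ⟨d, _⟩ h
    exact Subtype.ext ((Finset.erase_inj _ (mem_innerCorners.1 hc).prop).1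
      (congrArg (cells ∘ Subtype.val) h))
  · rintro ⟨ν, h⟩
    obtain ⟨c, hc, rfl⟩ := exists_eq_eraseCell_of_covBy h
    exact ⟨⟨c, hc⟩, rfl⟩

theorem minimal_notMem_iff {i j : ℕ} :
    Minimal (· ∉ μ) (i, j) ↔ j = μ.rowLen i ∧ ∀ k < i, j < μ.rowLen k := by
  simp only [minimal_iff_forall_lt, not_not, Prod.forall, Prod.mk_lt_mk, mem_iff_lt_rowLen,
    not_lt]
  constructor
  · rintro ⟨hle, hlt⟩
    refine ⟨le_antisymm ?_ hle, fun k hk => hlt k j (.inl ⟨hk, le_rfl⟩)⟩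
    rcases j with _ | j
    · exact Nat.zero_le _
    · exact hlt i j (.inr ⟨le_rfl, j.lt_succ_self⟩)
  · rintro ⟨rfl, hlt⟩
    refine ⟨le_rfl, fun a b hab => ?_⟩
    rcases hab with ⟨ha, hb⟩ | ⟨ha, hb⟩
    · exact hb.trans_lt (hlt a ha)
    · exact hb.trans_le (μ.rowLen_anti a i ha)

theorem maximal_mem_iff {i j : ℕ} :
    Maximal (· ∈ μ) (i, j) ↔ j + 1 = μ.rowLen i ∧ μ.rowLen (i + 1) ≤ j := by
  simp only [maximal_iff_forall_gt, Prod.forall, Prod.mk_lt_mk, mem_iff_lt_rowLen, not_lt]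
  constructor
  · rintro ⟨hlt, hge⟩
    exact ⟨le_antisymm hlt (hge i (j + 1) (.inr ⟨le_rfl, j.lt_succ_self⟩)),
      hge (i + 1) j (.inl ⟨i.lt_succ_self, le_rfl⟩)⟩
  · rintro ⟨hrow, hnext⟩
    refine ⟨by omega, fun a b hab => ?_⟩
    rcases hab with ⟨ha, hb⟩ | ⟨ha, hb⟩
    · exact (μ.rowLen_anti _ _ ha).trans (hnext.trans hb)
    · exact (μ.rowLen_anti _ _ ha).trans (hrow ▸ hb)

theorem outerCorners_eq_insert_image_innerCorners (μ : YoungDiagram) :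
    μ.outerCorners = insert (0, μ.rowLen 0)
      ((fun c => (c.1 + 1, μ.rowLen (c.1 + 1))) '' μ.innerCorners) := by
  ext ⟨i, j⟩
  simp only [mem_outerCorners, minimal_notMem_iff, Set.mem_insert_iff, Set.mem_image,
    mem_innerCorners, maximal_mem_iff, Prod.exists, Prod.mk.injEq]
  constructor
  · rintro ⟨rfl, hlt⟩
    rcases i with _ | i
    · exact .inl ⟨rfl, rfl⟩
    · have := hlt i i.lt_succ_self
      exact .inr ⟨i, μ.rowLen i - 1, ⟨by omega, by omega⟩, rfl, rfl⟩
  · rintro (⟨rfl, rfl⟩ | ⟨a, b, ⟨hrow, hnext⟩, rfl, rfl⟩)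
    · exact ⟨rfl, fun k hk => absurd hk (Nat.not_lt_zero k)⟩
    · exact ⟨rfl, fun k hk => by have := μ.rowLen_anti k a (by omega); omega⟩

theorem card_outerCorners_eq_card_innerCorners_add_one (μ : YoungDiagram) :
    Nat.card μ.outerCorners = Nat.card μ.innerCorners + 1 := by
  have hfin : μ.innerCorners.Finite := μ.cells.finite_toSet.subset fun c hc => hc.prop
  have hinj : Set.InjOn (fun c => (c.1 + 1, μ.rowLen (c.1 + 1))) μ.innerCorners := by
    rintro ⟨i, j⟩ hij ⟨i', j'⟩ hij' h
    simp only [mem_innerCorners, maximal_mem_iff, Prod.mk.injEq] at hij hij' h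
    obtain rfl : i = i' := by omega
    exact Prod.ext rfl (by omega)
  rw [Nat.card_coe_set_eq, Nat.card_coe_set_eq, outerCorners_eq_insert_image_innerCorners,
    Set.ncard_insert_of_notMem (by simp) (hfin.image _), hinj.ncard_image]

theorem card_upperCovers_eq_card_lowerCovers_add_one (μ : YoungDiagram) :
    Nat.card {ν | μ ⋖ ν} = Nat.card {ν | ν ⋖ μ} + 1 := by
  rw [card_upperCovers_eq_card_outerCorners, card_lowerCovers_eq_card_innerCorners,
    card_outerCorners_eq_card_innerCorners_add_one]

end YoungDiagram

/-- Young's lattice (Young diagrams ordered by containment) is a 1-differential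
poset: every diagram is covered by exactly one more diagram than it covers
(D2 with `r = 1`), and two distinct diagrams have a common upper cover iff they
have a common lower cover, in which case there is exactly one of each (D1). -/
theorem youngs_lattice_is_one_differential :
    (∀ lam : YoungDiagram,
      Nat.card {mu : YoungDiagram | lam ⋖ mu} =
        Nat.card {mu : YoungDiagram | mu ⋖ lam} + 1) ∧
    (∀ lam mu : YoungDiagram, lam ≠ mu →
      ((∃ nu : YoungDiagram, lam ⋖ nu ∧ mu ⋖ nu) ↔
        (∃ nu : YoungDiagram, nu ⋖ lam ∧ nu ⋖ mu)) ∧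
      ((∃ nu : YoungDiagram, lam ⋖ nu ∧ mu ⋖ nu) →
        Nat.card {nu : YoungDiagram | lam ⋖ nu ∧ mu ⋖ nu} = 1 ∧
        Nat.card {nu : YoungDiagram | nu ⋖ lam ∧ nu ⋖ mu} = 1)) := by
  refine ⟨YoungDiagram.card_upperCovers_eq_card_lowerCovers_add_one, fun lam mu hne => ?_⟩
  have hup := exists_covBy_and_covBy_iff_covBy_sup hne
  have hdown := exists_covBy_and_covBy_iff_inf_covBy hne
  have hmod := covBy_sup_and_covBy_sup_iff_inf_covBy (a := lam) (b := mu)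
  refine ⟨hup.trans (hmod.trans hdown.symm), fun h => ?_⟩
  obtain ⟨hsup, hsup'⟩ := hup.1 h
  obtain ⟨hinf, hinf'⟩ := hmod.1 ⟨hsup, hsup'⟩
  rw [setOf_covBy_and_covBy_eq_sup hne hsup hsup', setOf_covBy_and_covBy_eq_inf hne hinf hinf']
  exact ⟨Nat.card_unique, Nat.card_unique⟩
end
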